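/- Suppose X is a compact manifold of dimension 6 with classes h³, hc₂ ∈ H⁶(X, ℚ) satisfying ∫ h³β³ = x·q(h)q(β)q(h,β) + y·q(h,β)³ and ∫ hc₂β³ = z·q(h,β)q(β) for all β, where x, y, z are nonzero rationals and q is a nondegenerate quadratic form on H²(X,ℚ) of rank ≥ 2 representing zero. Then h³ and hc₂ are linearly independent in H⁶(X, ℚ). -/
import Mathlib


/-- Two degree-6 classes `h³` and `h·c₂` whose intersection numbers against `β³`
are given by the displayed polynomial formulas (with nonzero constants `x, y, z`,
and `q` nondegenerate of rank ≥ 2 representing zero) are linearly independent. -/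
theorem stmt1 {H V : Type*} [AddCommGroup H] [Module ℚ H]
    [AddCommGroup V] [Module ℚ V] [FiniteDimensional ℚ V]
    (Q : QuadraticForm ℚ V)
    (hnd : ∀ v : V, (∀ w : V, QuadraticMap.polar Q v w = 0) → v = 0)
    (hdim : 2 ≤ Module.finrank ℚ V)
    (hiso : ∃ β : V, β ≠ 0 ∧ Q β = 0)
    (h : V) (hqh : Q h ≠ 0)
    (I : H →ₗ[ℚ] (V → ℚ))
    (h3 hc2 : H) (x y z : ℚ) (hx : x ≠ 0) (hy : y ≠ 0) (hz : z ≠ 0)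
    (hI3 : ∀ β, I h3 β =
      x * Q h * Q β * QuadraticMap.polar Q h β + y * (QuadraticMap.polar Q h β) ^ 3)
    (hI2 : ∀ β, I hc2 β = z * QuadraticMap.polar Q h β * Q β) :
    LinearIndependent ℚ ![h3, hc2] := by
  classical
  obtain ⟨β, hβ0, hβQ⟩ := hiso
  have hh0 : h ≠ 0 := fun e => hqh (by simp [e])
  -- find u with polar Q h u ≠ 0 and polar Q β u ≠ 0
  have h1 : ∃ u, QuadraticMap.polar Q h u ≠ 0 := by
    by_contra hc; push_neg at hc; exact hh0 (hnd h hc)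
  have h2 : ∃ u, QuadraticMap.polar Q β u ≠ 0 := by
    by_contra hc; push_neg at hc; exact hβ0 (hnd β hc)
  obtain ⟨u₁, hu₁⟩ := h1
  obtain ⟨u₂, hu₂⟩ := h2
  -- an isotropic vector not polar-orthogonal to h
  obtain ⟨β₀, hQβ₀, hPβ₀⟩ : ∃ b, Q b = 0 ∧ QuadraticMap.polar Q h b ≠ 0 := by
    by_cases hc : QuadraticMap.polar Q h β ≠ 0
    · exact ⟨β, hβQ, hc⟩
    push_neg at hc
    have hPβh : QuadraticMap.polar Q β h = 0 := by
      rwa [QuadraticMap.polar_comm]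
    obtain ⟨u, hu1, hu2⟩ : ∃ u, QuadraticMap.polar Q h u ≠ 0 ∧
        QuadraticMap.polar Q β u ≠ 0 := by
      by_cases c1 : QuadraticMap.polar Q β u₁ ≠ 0
      · exact ⟨u₁, hu₁, c1⟩
      by_cases c2 : QuadraticMap.polar Q h u₂ ≠ 0
      · exact ⟨u₂, c2, hu₂⟩
      push_neg at c1 c2
      exact ⟨u₁ + u₂, by
        rw [QuadraticMap.polar_add_right]; simpa [c2], by
        rw [QuadraticMap.polar_add_right]; simpa [c1]⟩
    by_cases hQu : Q u = 0
    · exact ⟨u, hQu, hu1⟩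
    · set t : ℚ := -(QuadraticMap.polar Q β u) / Q u with ht
      have ht0 : t ≠ 0 := by
        simp only [ht, div_ne_zero_iff, neg_ne_zero]
        exact ⟨hu2, hQu⟩
      refine ⟨β + t • u, ?_, ?_⟩
      · rw [QuadraticMap.map_add (⇑Q), QuadraticMap.polar_smul_right,
          QuadraticMap.map_smul, hβQ, smul_eq_mul, smul_eq_mul, ht]
        field_simp
        ring
      · rw [QuadraticMap.polar_add_right, QuadraticMap.polar_smul_right, hc,
          smul_eq_mul, zero_add]
        exact mul_ne_zero ht0 hu1
  rw [LinearIndependent.pair_iff]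
  intro s t hst
  have key : ∀ γ, s * (x * Q h * Q γ * QuadraticMap.polar Q h γ
      + y * (QuadraticMap.polar Q h γ) ^ 3)
      + t * (z * QuadraticMap.polar Q h γ * Q γ) = 0 := by
    intro γ
    have := congrArg (fun v => I v γ) hst
    simpa [map_add, map_smul, hI3, hI2] using this
  have hs : s = 0 := by
    have k := key β₀
    rw [hQβ₀] at k
    have : s * y * (QuadraticMap.polar Q h β₀) ^ 3 = 0 := by linarith [k]
    rcases mul_eq_zero.mp this with h' | h'
    · rcases mul_eq_zero.mp h' with h'' | h''
      · exact h''
      · exact absurd h'' hy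
    · exact absurd h' (pow_ne_zero 3 hPβ₀)
  have ht : t = 0 := by
    have k := key h
    rw [hs] at k
    have hph : QuadraticMap.polar Q h h = 2 * Q h := by
      rw [QuadraticMap.polar_self]; push_cast; ring
    rw [hph] at k
    have : t * (z * (2 * Q h) * Q h) = 0 := by linarith [k]
    rcases mul_eq_zero.mp this with h' | h'
    · exact h'
    · exfalso
      rcases mul_eq_zero.mp h' with h'' | h''
      · rcases mul_eq_zero.mp h'' with h3 | h3
        · exact hz h3
        · rcases mul_eq_zero.mp h3 with h4 | h4
          · norm_num at h4
          · exact hqh h4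
      · exact hqh h''
  exact ⟨hs, ht⟩
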